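/- arXiv:2307.15062 — 6 statements merged into one kernel-verified Lean document; each statement's English description precedes it below -/
import Mathlib

section
/- Let H be an n×n complex Hermitian matrix whose kernel is one-dimensional and spanned by a unit vector ψ₀, let Δ = min{|λ| : λ is a nonzero eigenvalue of H}, let a and b be unit vectors in ℂⁿ with ⟨b, ψ₀⟩·⟨ψ₀, a⟩ ≠ 0, and set τ = 4/(Δ·|⟨b, ψ₀⟩⟨ψ₀, a⟩|). Then the time-averaged transition probability satisfies (1/τ)·∫₀^τ |⟨b, exp(−itH)·a⟩|² dt ≥ (1/4)·|⟨b, ψ₀⟩⟨ψ₀, a⟩|². -/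
/-!
In an orthonormal eigenbasis `(v k, λ k)` of `H` the amplitude `⟨b, exp(-itH) a⟩` is the
trigonometric sum `∑ k, exp(-itλₖ) wₖ` with `wₖ = ⟨b, vₖ⟩⟨vₖ, a⟩`, and by Cauchy–Schwarz and
Parseval `∑ |wₖ| ≤ ‖a‖‖b‖ = 1`. As the kernel of `H` is the line through `ψ₀`, exactly one `λₖ`
vanishes and its weight is `c = ⟨b, ψ₀⟩⟨ψ₀, a⟩`. Over `[0, τ]` this term integrates to `τc`,
while each oscillating term integrates to at most `2|wₖ|/Δ`; so the time average of the
amplitude has modulus at least `|c| - 2/(τΔ) = |c|/2`, and Jensen's inequality for `‖·‖²`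
bounds the averaged transition probability below by its square.
-/

open MeasureTheory Matrix

theorem sq_norm_interval_average_le {E : Type*} [NormedAddCommGroup E] [NormedSpace ℝ E]
    [CompleteSpace E] {f : ℝ → E} {a b : ℝ} (hab : a < b)
    (hf : IntervalIntegrable f volume a b)
    (hf2 : IntervalIntegrable (fun t => ‖f t‖ ^ 2) volume a b) :
    ‖⨍ t in a..b, f t‖ ^ 2 ≤ ⨍ t in a..b, ‖f t‖ ^ 2 := by
  have hconv : ConvexOn ℝ Set.univ (fun x : E => ‖x‖ ^ 2) :=
    convexOn_univ_norm.pow (fun _ _ => norm_nonneg _) 2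
  refine hconv.map_set_average_le (by fun_prop) isClosed_univ ?_ ?_ ?_
    (intervalIntegrable_iff.mp hf) (intervalIntegrable_iff.mp hf2)
  · simp [Set.uIoc_of_le hab.le, hab]
  · simp [Set.uIoc_of_le hab.le]
  · simp

theorem le_norm_interval_average_of_norm_integral_sub_le {E : Type*} [NormedAddCommGroup E]
    [NormedSpace ℝ E] {f : ℝ → E} {c : E} {τ : ℝ} (hτ : 0 < τ)
    (h : ‖(∫ t in (0:ℝ)..τ, f t) - τ • c‖ ≤ τ * ‖c‖ / 2) :
    ‖c‖ / 2 ≤ ‖⨍ t in (0:ℝ)..τ, f t‖ := by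
  have hrev := norm_sub_norm_le (τ • c) (∫ t in (0:ℝ)..τ, f t)
  rw [norm_sub_rev, norm_smul, Real.norm_of_nonneg hτ.le] at hrev
  rw [interval_average_eq, sub_zero, norm_smul, norm_inv, Real.norm_of_nonneg hτ.le,
    le_inv_mul_iff₀ hτ]
  linarith

theorem norm_integral_exp_neg_mul_I_le {μ : ℝ} (hμ : μ ≠ 0) (τ : ℝ) :
    ‖∫ t in (0:ℝ)..τ, Complex.exp (-(t : ℂ) * Complex.I * μ)‖ ≤ 2 / |μ| := by
  have hc : -Complex.I * μ ≠ 0 := by simp [hμ]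
  have hunit : ∀ s : ℝ, ‖Complex.exp (-Complex.I * μ * s)‖ = 1 := fun s => by
    rw [show -Complex.I * μ * s = ((-(μ * s) : ℝ) : ℂ) * Complex.I by push_cast; ring]
    exact Complex.norm_exp_ofReal_mul_I _
  simp_rw [show ∀ t : ℝ, -(t : ℂ) * Complex.I * μ = -Complex.I * μ * t from fun t => by ring]
  rw [integral_exp_mul_complex hc, norm_div]
  calc _ ≤ (1 + 1) / |μ| := by
        gcongr
        · exact (norm_sub_le _ _).trans (by rw [hunit, hunit])
        · simp
    _ = 2 / |μ| := by norm_num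

theorem norm_integral_sum_exp_sub_le {ι : Type*} [Fintype ι] (μ : ι → ℝ) (w : ι → ℂ)
    {Δ : ℝ} (hΔ : 0 < Δ) (hgap : ∀ k, μ k ≠ 0 → Δ ≤ |μ k|) (τ : ℝ) :
    ‖(∫ t in (0:ℝ)..τ, ∑ k, Complex.exp (-(t : ℂ) * Complex.I * μ k) * w k) -
        τ • ∑ k ∈ Finset.univ.filter (μ · = 0), w k‖ ≤ 2 / Δ * ∑ k, ‖w k‖ := by
  rw [intervalIntegral.integral_finsetSum fun k _ => by
      apply Continuous.intervalIntegrable; fun_prop,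
    Finset.sum_filter, Finset.smul_sum, ← Finset.sum_sub_distrib, Finset.mul_sum]
  refine (norm_sum_le _ _).trans (Finset.sum_le_sum fun k _ => ?_)
  rw [intervalIntegral.integral_mul_const]
  by_cases hk : μ k = 0
  · simpa [hk] using (by positivity : 0 ≤ 2 / Δ * ‖w k‖)
  · rw [if_neg hk, smul_zero, sub_zero, norm_mul]
    gcongr
    calc _ ≤ 2 / |μ k| := norm_integral_exp_neg_mul_I_le hk τ
      _ ≤ 2 / Δ := by gcongr; exact hgap k hk

theorem OrthonormalBasis.sum_norm_inner_mul_inner_le {ι 𝕜 E : Type*} [Fintype ι] [RCLike 𝕜]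
    [NormedAddCommGroup E] [InnerProductSpace 𝕜 E] (v : OrthonormalBasis ι 𝕜 E) (x y : E) :
    ∑ i, ‖inner 𝕜 x (v i) * inner 𝕜 (v i) y‖ ≤ ‖x‖ * ‖y‖ := by
  calc ∑ i, ‖inner 𝕜 x (v i) * inner 𝕜 (v i) y‖
      = ∑ i, ‖inner 𝕜 x (v i)‖ * ‖inner 𝕜 (v i) y‖ := by simp only [norm_mul]
    _ ≤ √(∑ i, ‖inner 𝕜 x (v i)‖ ^ 2) * √(∑ i, ‖inner 𝕜 (v i) y‖ ^ 2) :=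
      Real.sum_mul_le_sqrt_mul_sqrt _ _ _
    _ = ‖x‖ * ‖y‖ := by
      rw [v.sum_sq_norm_inner_left, v.sum_sq_norm_inner_right, Real.sqrt_sq (norm_nonneg _),
        Real.sqrt_sq (norm_nonneg _)]

theorem EuclideanSpace.norm_toLp_eq_one {ι 𝕜 : Type*} [Fintype ι] [RCLike 𝕜] {x : ι → 𝕜}
    (hx : star x ⬝ᵥ x = 1) : ‖WithLp.toLp 2 x‖ = 1 := by
  have hsq : ‖WithLp.toLp 2 x‖ ^ 2 = 1 := by
    rw [@norm_sq_eq_re_inner 𝕜, EuclideanSpace.inner_toLp_toLp, dotProduct_comm, hx,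
      RCLike.one_re]
  exact (pow_eq_one_iff_of_nonneg (norm_nonneg _) two_ne_zero).mp hsq

namespace Matrix.IsHermitian

variable {ι : Type*} [Fintype ι] [DecidableEq ι] {H : Matrix ι ι ℂ} (hH : H.IsHermitian)

theorem exp_smul_eq_conj_diagonal (z : ℂ) :
    NormedSpace.exp (z • H) = (hH.eigenvectorUnitary : Matrix ι ι ℂ) *
      diagonal (fun k => Complex.exp (z * hH.eigenvalues k)) *
        star (hH.eigenvectorUnitary : Matrix ι ι ℂ) := by
  have hzH : z • H = Unitary.conjStarAlgAut ℂ _ hH.eigenvectorUnitary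
      (diagonal fun k => z * hH.eigenvalues k) := by
    conv_lhs => rw [hH.spectral_theorem]
    rw [← map_smul, ← diagonal_smul]
    rfl
  have hconj := Matrix.exp_units_conj (Unitary.toUnits hH.eigenvectorUnitary)
    (diagonal fun k => z * (hH.eigenvalues k : ℂ))
  simp only [Unitary.val_toUnits_apply, Unitary.val_inv_toUnits_apply,
    ← Unitary.star_eq_inv, Unitary.coe_star] at hconj
  rw [hzH, Unitary.conjStarAlgAut_apply, hconj, exp_diagonal]
  congr 3
  ext k
  simp [Complex.exp_eq_exp_ℂ]

noncomputable def spectralWeight (a b : ι → ℂ) (k : ι) : ℂ :=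
  (star b ⬝ᵥ ⇑(hH.eigenvectorBasis k)) * (star ⇑(hH.eigenvectorBasis k) ⬝ᵥ a)

theorem dotProduct_exp_smul_mulVec (z : ℂ) (a b : ι → ℂ) :
    star b ⬝ᵥ NormedSpace.exp (z • H) *ᵥ a =
      ∑ k, Complex.exp (z * hH.eigenvalues k) * hH.spectralWeight a b k := by
  rw [hH.exp_smul_eq_conj_diagonal, ← mulVec_mulVec, ← mulVec_mulVec, dotProduct_mulVec]
  refine Finset.sum_congr rfl fun k _ => ?_
  have hrow : (star b ᵥ* (hH.eigenvectorUnitary : Matrix ι ι ℂ)) k =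
      star b ⬝ᵥ ⇑(hH.eigenvectorBasis k) := rfl
  have hcol : (star (hH.eigenvectorUnitary : Matrix ι ι ℂ) *ᵥ a) k =
      star ⇑(hH.eigenvectorBasis k) ⬝ᵥ a := rfl
  rw [mulVec_diagonal, spectralWeight, hrow, hcol]
  ring

theorem sum_norm_spectralWeight_le (a b : ι → ℂ) :
    ∑ k, ‖hH.spectralWeight a b k‖ ≤ ‖WithLp.toLp 2 a‖ * ‖WithLp.toLp 2 b‖ := by
  have hweight : ∀ k, hH.spectralWeight a b k =
      inner ℂ (WithLp.toLp 2 b) (hH.eigenvectorBasis k) *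
        inner ℂ (hH.eigenvectorBasis k) (WithLp.toLp 2 a) := fun k => by
    simp only [spectralWeight, EuclideanSpace.inner_eq_star_dotProduct]
    congr 1 <;> exact dotProduct_comm _ _
  simpa only [hweight, mul_comm ‖WithLp.toLp 2 a‖] using
    hH.eigenvectorBasis.sum_norm_inner_mul_inner_le (WithLp.toLp 2 b) (WithLp.toLp 2 a)

theorem star_dotProduct_eigenvectorBasis (k l : ι) :
    star ⇑(hH.eigenvectorBasis k) ⬝ᵥ ⇑(hH.eigenvectorBasis l) = if k = l then 1 else 0 := by
  rw [dotProduct_comm, ← orthonormal_iff_ite.mp hH.eigenvectorBasis.orthonormal k l]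
  rfl

theorem exists_eigenvalues_eq_zero {ψ : ι → ℂ} (hψ : ψ ≠ 0) (hHψ : H *ᵥ ψ = 0) :
    ∃ k, hH.eigenvalues k = 0 := by
  have hdet : H.det = 0 := exists_mulVec_eq_zero_iff.mp ⟨ψ, hψ, hHψ⟩
  simpa [hH.det_eq_prod_eigenvalues, Finset.prod_eq_zero_iff] using hdet

theorem exists_eigenvectorBasis_eq_smul {ψ : ι → ℂ}
    (hker : ∀ v, H *ᵥ v = 0 → ∃ c : ℂ, v = c • ψ) {k : ι} (hk : hH.eigenvalues k = 0) :
    ∃ c : ℂ, ⇑(hH.eigenvectorBasis k) = c • ψ ∧ star c * c * (star ψ ⬝ᵥ ψ) = 1 := by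
  obtain ⟨c, hc⟩ := hker _ (by rw [hH.mulVec_eigenvectorBasis, hk, zero_smul])
  refine ⟨c, hc, ?_⟩
  have hnorm := hH.star_dotProduct_eigenvectorBasis k k
  rw [if_pos rfl, hc] at hnorm
  simp only [star_smul, smul_dotProduct, dotProduct_smul, smul_eq_mul] at hnorm
  linear_combination hnorm

theorem eigenvalues_eq_zero_unique {ψ : ι → ℂ}
    (hker : ∀ v, H *ᵥ v = 0 → ∃ c : ℂ, v = c • ψ) {k l : ι} (hk : hH.eigenvalues k = 0)
    (hl : hH.eigenvalues l = 0) : k = l := by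
  obtain ⟨c, hck, hc⟩ := hH.exists_eigenvectorBasis_eq_smul hker hk
  obtain ⟨d, hdl, hd⟩ := hH.exists_eigenvectorBasis_eq_smul hker hl
  by_contra hne
  have horth := hH.star_dotProduct_eigenvectorBasis k l
  rw [if_neg hne, hck, hdl] at horth
  simp only [star_smul, smul_dotProduct, dotProduct_smul, smul_eq_mul] at horth
  -- `|⟨c ψ, d ψ⟩|² = ‖c ψ‖² ‖d ψ‖²` for parallel vectors, so orthogonality contradicts `hc`, `hd`.
  exact one_ne_zero <| by
    linear_combination -(star d * d * (star ψ ⬝ᵥ ψ)) * hc - hd +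
      c * star d * (star ψ ⬝ᵥ ψ) * horth

theorem sum_spectralWeight_eigenvalues_eq_zero {ψ : ι → ℂ} (hψ : star ψ ⬝ᵥ ψ = 1)
    (hHψ : H *ᵥ ψ = 0) (hker : ∀ v, H *ᵥ v = 0 → ∃ c : ℂ, v = c • ψ) (a b : ι → ℂ) :
    ∑ k ∈ Finset.univ.filter (hH.eigenvalues · = 0), hH.spectralWeight a b k =
      (star b ⬝ᵥ ψ) * (star ψ ⬝ᵥ a) := by
  obtain ⟨k₀, hk₀⟩ := hH.exists_eigenvalues_eq_zero (by rintro rfl; simp at hψ) hHψ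
  rw [Finset.sum_eq_single_of_mem k₀ (by simpa using hk₀) fun k hk hne =>
    absurd (hH.eigenvalues_eq_zero_unique hker (by simpa using hk) hk₀) hne]
  obtain ⟨c, hck, hc⟩ := hH.exists_eigenvectorBasis_eq_smul hker hk₀
  rw [hψ, mul_one] at hc
  simp only [spectralWeight, hck, star_smul, smul_dotProduct, dotProduct_smul, smul_eq_mul]
  linear_combination (star b ⬝ᵥ ψ) * (star ψ ⬝ᵥ a) * hc

end Matrix.IsHermitian

theorem quantum_walk_hitting_lower_bound_general
    (n : ℕ) (H : Matrix (Fin n) (Fin n) ℂ) (hH : H.IsHermitian)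
    (ψ₀ a b : Fin n → ℂ)
    (hψ₀unit : star ψ₀ ⬝ᵥ ψ₀ = 1)
    (hψ₀ker : H.mulVec ψ₀ = 0)
    (hker : ∀ v : Fin n → ℂ, H.mulVec v = 0 → ∃ c : ℂ, v = c • ψ₀)
    (ha : star a ⬝ᵥ a = 1) (hb : star b ⬝ᵥ b = 1)
    (Δ : ℝ)
    (hΔ : IsLeast {x : ℝ | ∃ i, hH.eigenvalues i ≠ 0 ∧ x = |hH.eigenvalues i|} Δ)
    (τ : ℝ)
    (hτ : τ = 4 / (Δ * ‖(star b ⬝ᵥ ψ₀) * (star ψ₀ ⬝ᵥ a)‖)) :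
    (1 / τ) * ∫ t in (0:ℝ)..τ,
        ‖star b ⬝ᵥ (NormedSpace.exp ((-(t : ℂ) * Complex.I) • H)).mulVec a‖ ^ 2
      ≥ (1 / 4) * ‖(star b ⬝ᵥ ψ₀) * (star ψ₀ ⬝ᵥ a)‖ ^ 2 := by
  set c := (star b ⬝ᵥ ψ₀) * (star ψ₀ ⬝ᵥ a)
  -- If the overlap vanishes, then `τ = 4 / 0 = 0` and both sides are `0`.
  rcases eq_or_ne c 0 with hc | hc
  · simp [hτ, hc]
  have hΔpos : 0 < Δ := by
    obtain ⟨⟨i, hi, rfl⟩, -⟩ := hΔ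
    exact abs_pos.mpr hi
  have hτpos : 0 < τ := by rw [hτ]; positivity
  simp only [hH.dotProduct_exp_smul_mulVec, ge_iff_le, one_div]
  set g : ℝ → ℂ := fun t =>
    ∑ k, Complex.exp (-(t : ℂ) * Complex.I * hH.eigenvalues k) * hH.spectralWeight a b k
  have hg : Continuous g := by fun_prop
  have hgap : ∀ k, hH.eigenvalues k ≠ 0 → Δ ≤ |hH.eigenvalues k| := fun k hk => hΔ.2 ⟨k, hk, rfl⟩
  have hclose : ‖(∫ t in (0:ℝ)..τ, g t) - τ • c‖ ≤ τ * ‖c‖ / 2 := by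
    calc _ ≤ 2 / Δ * ∑ k, ‖hH.spectralWeight a b k‖ := by
          simpa only [hH.sum_spectralWeight_eigenvalues_eq_zero hψ₀unit hψ₀ker hker a b] using
            norm_integral_sum_exp_sub_le _ (hH.spectralWeight a b) hΔpos hgap τ
      _ ≤ 2 / Δ * 1 := by
          gcongr
          simpa only [EuclideanSpace.norm_toLp_eq_one ha, EuclideanSpace.norm_toLp_eq_one hb,
            mul_one] using
            hH.sum_norm_spectralWeight_le a b
      _ = τ * ‖c‖ / 2 := by rw [hτ]; field_simp; norm_num
  calc 4⁻¹ * ‖c‖ ^ 2 = (‖c‖ / 2) ^ 2 := by ring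
    _ ≤ ‖⨍ t in (0:ℝ)..τ, g t‖ ^ 2 := by
        gcongr
        exact le_norm_interval_average_of_norm_integral_sub_le hτpos hclose
    _ ≤ ⨍ t in (0:ℝ)..τ, ‖g t‖ ^ 2 := sq_norm_interval_average_le hτpos
          (hg.intervalIntegrable 0 τ) ((hg.norm.pow 2).intervalIntegrable 0 τ)
    _ = τ⁻¹ * ∫ t in (0:ℝ)..τ, ‖g t‖ ^ 2 := by rw [interval_average_eq, sub_zero, smul_eq_mul]

/-- Let `H` be an `n × n` complex Hermitian matrix whose kernel is
one-dimensional and spanned by a unit vector `ψ₀`, let `Δ` be the smallest absolute value of a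
nonzero eigenvalue of `H`, let `a`, `b` be unit vectors with `⟨b,ψ₀⟩⟨ψ₀,a⟩ ≠ 0`, and set
`τ = 4 / (Δ * |⟨b,ψ₀⟩⟨ψ₀,a⟩|)`.  Then the time-averaged transition probability satisfies
`(1/τ) ∫₀^τ |⟨b, exp(-itH) a⟩|² dt ≥ (1/4) |⟨b,ψ₀⟩⟨ψ₀,a⟩|²`. -/
theorem quantum_walk_hitting_lower_bound
    (n : ℕ) (H : Matrix (Fin n) (Fin n) ℂ) (hH : H.IsHermitian)
    (ψ₀ a b : Fin n → ℂ)
    (hψ₀unit : star ψ₀ ⬝ᵥ ψ₀ = 1)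
    (hψ₀ker : H.mulVec ψ₀ = 0)
    (hker : ∀ v : Fin n → ℂ, H.mulVec v = 0 → ∃ c : ℂ, v = c • ψ₀)
    (ha : star a ⬝ᵥ a = 1) (hb : star b ⬝ᵥ b = 1)
    (hover : (star b ⬝ᵥ ψ₀) * (star ψ₀ ⬝ᵥ a) ≠ 0)
    (Δ : ℝ)
    (hΔ : IsLeast {x : ℝ | ∃ i, hH.eigenvalues i ≠ 0 ∧ x = |hH.eigenvalues i|} Δ)
    (τ : ℝ)
    (hτ : τ = 4 / (Δ * ‖(star b ⬝ᵥ ψ₀) * (star ψ₀ ⬝ᵥ a)‖)) :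
    (1 / τ) * ∫ t in (0:ℝ)..τ,
        ‖star b ⬝ᵥ (NormedSpace.exp ((-(t : ℂ) * Complex.I) • H)).mulVec a‖ ^ 2
      ≥ (1 / 4) * ‖(star b ⬝ᵥ ψ₀) * (star ψ₀ ⬝ᵥ a)‖ ^ 2 :=
  quantum_walk_hitting_lower_bound_general n H hH ψ₀ a b hψ₀unit hψ₀ker hker ha hb Δ hΔ τ hτ
end

section
/- Let n ≥ 1, let t₁, …, t_{2n} be nonzero real numbers, let H be the (2n+1)×(2n+1) real symmetric tridiagonal matrix with zero diagonal and off-diagonal entries H_{i,i+1} = H_{i+1,i} = tᵢ, and let ψ ∈ ℝ^{2n+1} be a unit vector with Hψ = 0. Setting T_j = ∏_{k=1}^{j} (t_{2k−1}/t_{2k}) for 0 ≤ j ≤ n (so T₀ = 1), the amplitudes at the two ends satisfy |ψ₁|·|ψ_{2n+1}| ≥ |T_n| / ((n+1)·max_{0 ≤ j ≤ n} T_j²). -/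
/-!
Row `i` of `H ψ = 0` reads `tᵢ₋₁ ψᵢ₋₁ + tᵢ ψᵢ₊₁ = 0`. The first row gives `t₁ ψ₂ = 0`, and then the
rows of odd index force `ψ` to vanish at every even position, while the rows of even index give
`ψ_{2j+1} = (-1)ʲ Tⱼ ψ₁`. Normalisation becomes `ψ₁² ∑_{j ≤ n} Tⱼ² = 1`, whence
`ψ₁² ≥ 1 / ((n+1) maxⱼ Tⱼ²)`, and `|ψ₁| |ψ_{2n+1}| = |Tₙ| ψ₁²`.
In the Lean statements vectors are indexed from `0`, so `ψ ⟨2j, _⟩` is the paper's `ψ_{2j+1}`.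
-/

/-- The `m × m` real symmetric tridiagonal matrix with zero diagonal and off-diagonal
entries `H_{i,i+1} = H_{i+1,i} = tᵢ` (1-based indexing of the `tᵢ`, so that rows/columns
`0, …, m-1` correspond to indices `1, …, m`). -/
def tridiagMatrix (m : ℕ) (t : ℕ → ℝ) : Matrix (Fin m) (Fin m) ℝ :=
  Matrix.of fun i j =>
    if (i : ℕ) + 1 = (j : ℕ) then t ((i : ℕ) + 1)
    else if (j : ℕ) + 1 = (i : ℕ) then t ((j : ℕ) + 1)
    else 0

open Matrix Finset

theorem tridiagMatrix_mulVec_apply_zero {m : ℕ} (t : ℕ → ℝ) (ψ : Fin m → ℝ) (h : 1 < m) :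
    (tridiagMatrix m t *ᵥ ψ) ⟨0, by omega⟩ = t 1 * ψ ⟨1, h⟩ := by
  rw [mulVec, dotProduct, Fintype.sum_eq_single ⟨1, h⟩]
  · simp [tridiagMatrix]
  · intro j hj
    have hj' : (j : ℕ) ≠ 1 := fun h' => hj (Fin.ext h')
    simp [tridiagMatrix, Ne.symm hj']

theorem tridiagMatrix_mulVec_apply_succ {m : ℕ} (t : ℕ → ℝ) (ψ : Fin m → ℝ) (i : ℕ)
    (h : i + 2 < m) :
    (tridiagMatrix m t *ᵥ ψ) ⟨i + 1, by omega⟩ =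
      t (i + 2) * ψ ⟨i + 2, h⟩ + t (i + 1) * ψ ⟨i, by omega⟩ := by
  rw [mulVec, dotProduct, Fintype.sum_eq_add ⟨i + 2, h⟩ ⟨i, by omega⟩ (by simp [Fin.ext_iff])]
  · simp [tridiagMatrix, show i + 1 + 1 ≠ i by omega]
  · rintro j ⟨hj₁, hj₂⟩
    have h₁ : (j : ℕ) ≠ i + 2 := fun h' => hj₁ (Fin.ext h')
    have h₂ : (j : ℕ) ≠ i := fun h' => hj₂ (Fin.ext h')
    simp only [tridiagMatrix, of_apply]
    rw [if_neg (by omega), if_neg (by omega), zero_mul]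

theorem sum_eq_sum_even_of_odd_eq_zero {M : Type*} [AddCommMonoid M] {n : ℕ}
    (f : Fin (2 * n + 1) → M) (hodd : ∀ j (h : 2 * j + 1 < 2 * n + 1), f ⟨2 * j + 1, h⟩ = 0) :
    ∑ i, f i = ∑ j : Fin (n + 1), f ⟨2 * j, by omega⟩ := by
  symm
  refine Fintype.sum_of_injective (fun j : Fin (n + 1) => (⟨2 * j, by omega⟩ : Fin (2 * n + 1)))
    (fun a b hab => Fin.ext (by simpa using congrArg Fin.val hab)) _ _ ?_ fun _ => rfl
  rintro ⟨i, hi⟩ hrange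
  obtain ⟨j, rfl | rfl⟩ := Nat.even_or_odd' i
  · exact absurd ⟨⟨j, by omega⟩, rfl⟩ hrange
  · exact hodd j hi

section Kernel

variable {m : ℕ} {t : ℕ → ℝ} {ψ : Fin m → ℝ}

theorem tridiagMatrix_kernel_odd_eq_zero (hker : tridiagMatrix m t *ᵥ ψ = 0)
    (ht : ∀ j, 2 * j + 1 < m → t (2 * j + 1) ≠ 0) (j : ℕ) (h : 2 * j + 1 < m) :
    ψ ⟨2 * j + 1, h⟩ = 0 := by
  induction j with
  | zero =>
    have hrow := congrFun hker ⟨0, by omega⟩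
    rw [tridiagMatrix_mulVec_apply_zero t ψ h, Pi.zero_apply] at hrow
    exact (mul_eq_zero.mp hrow).resolve_left (ht 0 h)
  | succ j ih =>
    have hrow := congrFun hker ⟨2 * j + 2, by omega⟩
    rw [tridiagMatrix_mulVec_apply_succ t ψ (2 * j + 1) h, ih (by omega), mul_zero, add_zero,
      Pi.zero_apply] at hrow
    exact (mul_eq_zero.mp hrow).resolve_left (ht (j + 1) h)

theorem tridiagMatrix_kernel_even_eq (hker : tridiagMatrix m t *ᵥ ψ = 0)
    (ht : ∀ j, 2 * j + 2 < m → t (2 * j + 2) ≠ 0) {T : ℕ → ℝ} (hT₀ : T 0 = 1)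
    (hT : ∀ j, T (j + 1) = T j * (t (2 * j + 1) / t (2 * j + 2))) (j : ℕ) (h : 2 * j < m) :
    ψ ⟨2 * j, h⟩ = (-1) ^ j * T j * ψ ⟨0, by omega⟩ := by
  induction j with
  | zero => simp [hT₀]
  | succ j ih =>
    have hrow := congrFun hker ⟨2 * j + 1, by omega⟩
    rw [tridiagMatrix_mulVec_apply_succ t ψ (2 * j) h, ih (by omega), Pi.zero_apply] at hrow
    have htj := ht j h
    rw [hT, pow_succ]
    field_simp
    linear_combination hrow

end Kernel

/-- For `n ≥ 1`, nonzero `t₁, …, t_{2n}`, and a unit vector `ψ` in the kernel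
of the `(2n+1)×(2n+1)` tridiagonal matrix, setting `T_j = ∏_{k=1}^{j} t_{2k-1}/t_{2k}`, the
endpoint amplitudes satisfy `|ψ₁|·|ψ_{2n+1}| ≥ |T_n| / ((n+1)·max_{0 ≤ j ≤ n} T_j²)`. -/
theorem tridiag_kernel_endpoint_amplitude_bound
    (n : ℕ) (t : ℕ → ℝ)
    (ht : ∀ k, 1 ≤ k → k ≤ 2 * n → t k ≠ 0)
    (ψ : Fin (2 * n + 1) → ℝ)
    (hunit : ∑ i, ψ i ^ 2 = 1)
    (hker : (tridiagMatrix (2 * n + 1) t).mulVec ψ = 0)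
    (T : ℕ → ℝ)
    (hT : ∀ j, T j = ∏ k ∈ Finset.Icc 1 j, t (2 * k - 1) / t (2 * k)) :
    |ψ 0| * |ψ ⟨2 * n, by omega⟩| ≥
      |T n| / (((n : ℝ) + 1) *
        (Finset.range (n + 1)).sup' (by simp) (fun j => (T j) ^ 2)) := by
  set M := (range (n + 1)).sup' (by simp) (fun j => (T j) ^ 2)
  have hT_succ (j : ℕ) : T (j + 1) = T j * (t (2 * j + 1) / t (2 * j + 2)) := by
    rw [hT, hT, prod_Icc_succ_top (by omega)]
    rfl
  have heven := tridiagMatrix_kernel_even_eq hker (fun j _ => ht _ (by omega) (by omega))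
    (by simp [hT]) hT_succ
  have hodd := tridiagMatrix_kernel_odd_eq_zero hker (fun j _ => ht _ (by omega) (by omega))
  have hnorm : (∑ j ∈ range (n + 1), T j ^ 2) * ψ 0 ^ 2 = 1 := by
    rw [← hunit, sum_eq_sum_even_of_odd_eq_zero _ fun j h => by rw [hodd j h, zero_pow two_ne_zero],
      ← Fin.sum_univ_eq_sum_range, sum_mul]
    refine sum_congr rfl fun j _ => ?_
    rw [heven, Fin.mk_zero, mul_pow, mul_pow, ← pow_mul, pow_mul', neg_one_sq, one_pow, one_mul]
  have hM : 0 ≤ M := (sq_nonneg (T 0)).trans (le_sup' (fun j => T j ^ 2) (by simp))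
  have hψ₀ : 1 ≤ ((n : ℝ) + 1) * M * ψ 0 ^ 2 := calc
    1 = (∑ j ∈ range (n + 1), T j ^ 2) * ψ 0 ^ 2 := hnorm.symm
    _ ≤ ((n : ℝ) + 1) * M * ψ 0 ^ 2 := by
      gcongr
      simpa using sum_le_card_nsmul (range (n + 1)) (fun j => T j ^ 2) M
        fun j hj => le_sup' (fun j => T j ^ 2) hj
  calc |T n| / ((n + 1) * M) ≤ |T n| * ψ 0 ^ 2 := by
        refine div_le_of_le_mul₀ (by positivity) (by positivity) ?_
        linarith [mul_le_mul_of_nonneg_left hψ₀ (abs_nonneg (T n))]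
    _ = |ψ 0| * |ψ ⟨2 * n, by omega⟩| := by
        rw [heven, Fin.mk_zero, abs_mul, abs_mul, abs_neg_one_pow, one_mul, ← sq_abs]
        ring
end

section
/- Let n ≥ 1 and let t₁, …, t_{2n−1} be nonzero real numbers, and let H be the 2n×2n real symmetric tridiagonal matrix with zero diagonal and off-diagonal entries H_{i,i+1} = H_{i+1,i} = tᵢ (indices 1-based). Then H is invertible, H⁻¹ is symmetric, and for all 1 ≤ i < j ≤ 2n: (H⁻¹)_{ij} = (1/tᵢ)·∏_{k=(i+1)/2}^{(j−2)/2} (−t_{2k}/t_{2k+1}) if i is odd and j is even, and (H⁻¹)_{ij} = 0 otherwise. -/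
open Finset

lemma tridiagMatrix_mul_of_apply {m : ℕ} (t : ℕ → ℝ) (f : ℕ → ℕ → ℝ) (a c : Fin m) :
    (tridiagMatrix m t * Matrix.of fun i j : Fin m => f i j) a c =
      (if 0 < (a : ℕ) then t a * f (a - 1) c else 0) +
        (if (a : ℕ) + 1 < m then t (a + 1) * f (a + 1) c else 0) := by
  have hterm : ∀ b : ℕ, (if (a : ℕ) + 1 = b then t (a + 1) else if b + 1 = a then t (b + 1)
      else 0) * f b c = (if 0 < (a : ℕ) then if b = a - 1 then t a * f (a - 1) c else 0 else 0) +
        (if b = a + 1 then t (a + 1) * f (a + 1) c else 0) := by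
    intro b
    split_ifs <;> first | omega | (subst_vars; simp [*])
  simp only [Matrix.mul_apply, tridiagMatrix, Matrix.of_apply]
  rw [Fin.sum_univ_eq_sum_range (fun b => (if (a : ℕ) + 1 = b then t (a + 1)
    else if b + 1 = a then t (b + 1) else 0) * f b c), sum_congr rfl fun b _ => hterm b,
    sum_add_distrib, sum_ite_eq']
  by_cases ha : 0 < (a : ℕ)
  · simp only [ha, if_true, sum_ite_eq', mem_range, show (a : ℕ) - 1 < m by omega]
  · simp only [ha, if_false, sum_const_zero, mem_range]

noncomputable def tridiagInvCoeff (t : ℕ → ℝ) (p q : ℕ) : ℝ :=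
  1 / t (2 * p + 1) * ∏ k ∈ Icc (p + 1) q, (-t (2 * k) / t (2 * k + 1))

lemma mul_tridiagInvCoeff_self {t : ℕ → ℝ} {p : ℕ} (h : t (2 * p + 1) ≠ 0) :
    t (2 * p + 1) * tridiagInvCoeff t p p = 1 := by
  simp [tridiagInvCoeff, h]

lemma mul_tridiagInvCoeff_of_lt_right {t : ℕ → ℝ} {p q : ℕ} (hpq : p < q)
    (h : t (2 * q + 1) ≠ 0) :
    t (2 * q + 1) * tridiagInvCoeff t p q = -t (2 * q) * tridiagInvCoeff t p (q - 1) := by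
  obtain ⟨q, rfl⟩ : ∃ q', q = q' + 1 := ⟨q - 1, by omega⟩
  rw [tridiagInvCoeff, tridiagInvCoeff, prod_Icc_succ_top (by omega), Nat.add_sub_cancel]
  field_simp

lemma mul_tridiagInvCoeff_of_lt_left {t : ℕ → ℝ} {p q : ℕ} (hpq : p < q)
    (h : t (2 * p + 1) ≠ 0) :
    t (2 * p + 1) * tridiagInvCoeff t p q = -t (2 * (p + 1)) * tridiagInvCoeff t (p + 1) q := by
  rw [tridiagInvCoeff, tridiagInvCoeff, ← mul_prod_Ioc_eq_prod_Icc (by omega),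
    ← Icc_add_one_left_eq_Ioc]
  field_simp

noncomputable def tridiagInvUpper (t : ℕ → ℝ) (a b : ℕ) : ℝ :=
  if Even a ∧ Odd b ∧ a < b then tridiagInvCoeff t (a / 2) (b / 2) else 0

noncomputable def tridiagInvEntry (t : ℕ → ℝ) (a b : ℕ) : ℝ :=
  tridiagInvUpper t a b + tridiagInvUpper t b a

lemma tridiagInvEntry_comm (t : ℕ → ℝ) (a b : ℕ) :
    tridiagInvEntry t a b = tridiagInvEntry t b a :=
  add_comm _ _

lemma tridiagInvEntry_of_lt (t : ℕ → ℝ) {a b : ℕ} (hab : a < b) :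
    tridiagInvEntry t a b = if Even a ∧ Odd b then tridiagInvCoeff t (a / 2) (b / 2) else 0 := by
  simp [tridiagInvEntry, tridiagInvUpper, hab, hab.not_gt]

lemma tridiagInvEntry_even_odd (t : ℕ → ℝ) (p q : ℕ) :
    tridiagInvEntry t (2 * p) (2 * q + 1) = if p ≤ q then tridiagInvCoeff t p q else 0 := by
  simp [tridiagInvEntry, tridiagInvUpper, show (2 * q + 1) / 2 = q by omega]

lemma tridiagInvEntry_odd_even (t : ℕ → ℝ) (p q : ℕ) :
    tridiagInvEntry t (2 * q + 1) (2 * p) = if p ≤ q then tridiagInvCoeff t p q else 0 := by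
  rw [tridiagInvEntry_comm, tridiagInvEntry_even_odd]

lemma tridiagInvEntry_even_even (t : ℕ → ℝ) (p q : ℕ) :
    tridiagInvEntry t (2 * p) (2 * q) = 0 := by
  simp [tridiagInvEntry, tridiagInvUpper, Nat.odd_iff]

lemma tridiagInvEntry_odd_odd (t : ℕ → ℝ) (p q : ℕ) :
    tridiagInvEntry t (2 * p + 1) (2 * q + 1) = 0 := by
  simp [tridiagInvEntry, tridiagInvUpper]

noncomputable def tridiagInv (m : ℕ) (t : ℕ → ℝ) : Matrix (Fin m) (Fin m) ℝ :=
  Matrix.of fun a b => tridiagInvEntry t a b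

section

variable {n : ℕ} {t : ℕ → ℝ}

lemma tridiagMatrix_mul_tridiagInv_apply_even_row (ht : ∀ p < n, t (2 * p + 1) ≠ 0) {p : ℕ}
    (hp : 2 * p < 2 * n) (c : Fin (2 * n)) :
    (tridiagMatrix (2 * n) t * tridiagInv (2 * n) t) ⟨2 * p, hp⟩ c =
      (1 : Matrix (Fin (2 * n)) (Fin (2 * n)) ℝ) ⟨2 * p, hp⟩ c := by
  obtain ⟨c, hc⟩ := c
  simp only [tridiagInv, tridiagMatrix_mul_of_apply, Matrix.one_apply, Fin.mk.injEq]
  rw [if_pos (by omega : 2 * p + 1 < 2 * n)]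
  obtain ⟨r, rfl | rfl⟩ := Nat.even_or_odd' c
  · rw [tridiagInvEntry_odd_even]
    rcases lt_trichotomy r p with hrp | rfl | hrp
    · obtain ⟨p, rfl⟩ : ∃ p', p = p' + 1 := ⟨p - 1, by omega⟩
      rw [if_pos (by omega : 0 < 2 * (p + 1)), show 2 * (p + 1) - 1 = 2 * p + 1 by omega,
        tridiagInvEntry_odd_even, if_pos (by omega : r ≤ p), if_pos (by omega : r ≤ p + 1),
        if_neg (by omega : 2 * (p + 1) ≠ 2 * r),
        mul_tridiagInvCoeff_of_lt_right hrp (ht (p + 1) (by omega)), Nat.add_sub_cancel]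
      ring
    · rw [if_pos le_rfl, mul_tridiagInvCoeff_self (ht r (by omega)), if_pos rfl]
      rcases r with _ | r
      · simp
      rw [show 2 * (r + 1) - 1 = 2 * r + 1 by omega, tridiagInvEntry_odd_even,
        if_neg (by omega : ¬r + 1 ≤ r)]
      simp
    · rw [if_neg (by omega : ¬r ≤ p), if_neg (by omega : 2 * p ≠ 2 * r), mul_zero, add_zero]
      split_ifs
      · rw [show 2 * p - 1 = 2 * (p - 1) + 1 by omega, tridiagInvEntry_odd_even,
          if_neg (by omega : ¬r ≤ p - 1), mul_zero]
      · rfl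
  · rw [tridiagInvEntry_odd_odd, if_neg (by omega : 2 * p ≠ 2 * r + 1), mul_zero, add_zero]
    split_ifs
    · rw [show 2 * p - 1 = 2 * (p - 1) + 1 by omega, tridiagInvEntry_odd_odd, mul_zero]
    · rfl

lemma tridiagMatrix_mul_tridiagInv_apply_odd_row (ht : ∀ p < n, t (2 * p + 1) ≠ 0) {p : ℕ}
    (hp : 2 * p + 1 < 2 * n) (c : Fin (2 * n)) :
    (tridiagMatrix (2 * n) t * tridiagInv (2 * n) t) ⟨2 * p + 1, hp⟩ c =
      (1 : Matrix (Fin (2 * n)) (Fin (2 * n)) ℝ) ⟨2 * p + 1, hp⟩ c := by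
  obtain ⟨c, hc⟩ := c
  simp only [tridiagInv, tridiagMatrix_mul_of_apply, Matrix.one_apply, Fin.mk.injEq]
  rw [if_pos (by omega : 0 < 2 * p + 1), Nat.add_sub_cancel,
    show 2 * p + 1 + 1 = 2 * (p + 1) by ring]
  obtain ⟨r, rfl | rfl⟩ := Nat.even_or_odd' c
  · simp only [tridiagInvEntry_even_even, mul_zero, ite_self, add_zero,
      if_neg (by omega : 2 * p + 1 ≠ 2 * r)]
  rw [tridiagInvEntry_even_odd, tridiagInvEntry_even_odd]
  rcases lt_trichotomy p r with hpr | rfl | hpr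
  · rw [if_pos hpr.le, if_pos (by omega : 2 * (p + 1) < 2 * n), if_pos (by omega : p + 1 ≤ r),
      if_neg (by omega : 2 * p + 1 ≠ 2 * r + 1),
      mul_tridiagInvCoeff_of_lt_left hpr (ht p (by omega))]
    ring
  · rw [if_pos le_rfl, mul_tridiagInvCoeff_self (ht p (by omega)), if_neg (by omega : ¬p + 1 ≤ p),
      mul_zero, ite_self, add_zero, if_pos rfl]
  · rw [if_neg (by omega : ¬p ≤ r), if_neg (by omega : ¬p + 1 ≤ r),
      if_neg (by omega : 2 * p + 1 ≠ 2 * r + 1)]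
    simp

theorem tridiagMatrix_mul_tridiagInv (ht : ∀ p < n, t (2 * p + 1) ≠ 0) :
    tridiagMatrix (2 * n) t * tridiagInv (2 * n) t = 1 := by
  ext ⟨a, ha⟩ c
  obtain ⟨p, rfl | rfl⟩ := Nat.even_or_odd' a
  · exact tridiagMatrix_mul_tridiagInv_apply_even_row ht ha c
  · exact tridiagMatrix_mul_tridiagInv_apply_odd_row ht ha c

end

/-- For `n ≥ 1` and nonzero `t₁, …, t_{2n-1}`, the `2n × 2n` tridiagonal
matrix `H` is invertible, `H⁻¹` is symmetric, and for `1 ≤ i < j ≤ 2n` (1-based) the entry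
`(H⁻¹)_{ij}` equals `(1/tᵢ)·∏_{k=(i+1)/2}^{(j-2)/2} (-t_{2k}/t_{2k+1})` when `i` is odd and
`j` is even, and `0` otherwise. -/
theorem tridiag_even_inverse_formula
    (n : ℕ) (t : ℕ → ℝ)
    (ht : ∀ k, 1 ≤ k → k ≤ 2 * n - 1 → t k ≠ 0) :
    IsUnit (tridiagMatrix (2 * n) t) ∧
    (tridiagMatrix (2 * n) t)⁻¹.IsSymm ∧
    ∀ i j : ℕ, (hi : 1 ≤ i) → (hij : i < j) → (hj : j ≤ 2 * n) →
      (tridiagMatrix (2 * n) t)⁻¹ ⟨i - 1, by omega⟩ ⟨j - 1, by omega⟩ =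
        if Odd i ∧ Even j then
          (1 / t i) *
            ∏ k ∈ Finset.Icc ((i + 1) / 2) ((j - 2) / 2), (-(t (2 * k)) / t (2 * k + 1))
        else 0 := by
  have hmul : tridiagMatrix (2 * n) t * tridiagInv (2 * n) t = 1 :=
    tridiagMatrix_mul_tridiagInv fun p hp => ht (2 * p + 1) (by omega) (by omega)
  have hinv : (tridiagMatrix (2 * n) t)⁻¹ = tridiagInv (2 * n) t := Matrix.inv_eq_right_inv hmul
  refine ⟨.of_mul_eq_one _ hmul, hinv ▸ Matrix.IsSymm.ext fun a b => tridiagInvEntry_comm t b a,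
    fun i j hi hij hj => ?_⟩
  rw [hinv, tridiagInv, Matrix.of_apply, tridiagInvEntry_of_lt t (by omega : i - 1 < j - 1),
    tridiagInvCoeff]
  simp only [Nat.even_iff, Nat.odd_iff]
  split_ifs
  · rw [show 2 * ((i - 1) / 2) + 1 = i by omega, show (i - 1) / 2 + 1 = (i + 1) / 2 by omega,
      show (j - 1) / 2 = (j - 2) / 2 by omega]
  · omega
  · omega
  · rfl
end

section
/- Let n ≥ 1 and let t₁, …, t_{2n−1} be positive real numbers with tᵢ ≥ c for all i, where c > 0, and suppose that every partial product ∏_{k=a}^{b} (t_{2k}/t_{2k+1}) with 1 ≤ a ≤ b ≤ n−1 is at most B, where B ≥ 1. Let H be the 2n×2n real symmetric tridiagonal matrix with zero diagonal and off-diagonal entries H_{i,i+1} = H_{i+1,i} = tᵢ. Then every eigenvalue λ of H satisfies |λ| ≥ c/(√(2n)·n·B). -/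
/-!
Extend an eigenvector `H w = λ w` by `w₀ = w_{2n+1} = 0`. Row `2q + 1` of the eigen-equation,
`t_{2q} w_{2q} + t_{2q+1} w_{2q+2} = λ w_{2q+1}`, bounds `|w_{2q+2}|` by `|λ| M / c` plus
`t_{2q}/t_{2q+1}` times `|w_{2q}|` (`M = max |wᵢ|`); row `2p` bounds `t_{2p-1} |w_{2p-1}|` by
`|λ| M` plus the same ratio `t_{2p}/t_{2p+1}` times `t_{2p+1} |w_{2p+1}|`. Unrolling these two
recurrences (forwards from `w₀ = 0`, backwards from `w_{2n+1} = 0`) bounds every entry by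
`|λ| M / c` times a sum of at most `n` partial products of the ratios, each at most `B`. At an
entry of maximal modulus this gives `c ≤ n B |λ|`, which is stronger than the claim since
`√(2n) ≥ 1`.
-/

open Finset Matrix

theorem le_mul_sum_prod_of_succ_le_add_mul {K : ℝ} {ρ e : ℕ → ℝ} {L N : ℕ}
    (hbase : e L ≤ K) (hρ : ∀ q, L ≤ q → q < N → 0 ≤ ρ q)
    (hstep : ∀ q, L ≤ q → q < N → e (q + 1) ≤ K + ρ q * e q) :
    ∀ p, L ≤ p → p ≤ N → e p ≤ K * ∑ q ∈ Icc L p, ∏ m ∈ Ico q p, ρ m := by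
  intro p hLp
  induction p, hLp using Nat.le_induction with
  | base => simpa using fun _ => hbase
  | succ p hLp ih =>
    intro hpN
    have hsum : ∑ q ∈ Icc L (p + 1), ∏ m ∈ Ico q (p + 1), ρ m
        = 1 + ρ p * ∑ q ∈ Icc L p, ∏ m ∈ Ico q p, ρ m := by
      rw [sum_Icc_succ_top (by omega), Ico_self, prod_empty, mul_sum, add_comm]
      congr 1
      refine sum_congr rfl fun q hq => ?_
      rw [prod_Ico_succ_top (mem_Icc.1 hq).2, mul_comm]
    calc e (p + 1) ≤ K + ρ p * e p := hstep p hLp (by omega)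
      _ ≤ K + ρ p * (K * ∑ q ∈ Icc L p, ∏ m ∈ Ico q p, ρ m) := by
        gcongr
        exacts [hρ p hLp (by omega), ih (by omega)]
      _ = K * ∑ q ∈ Icc L (p + 1), ∏ m ∈ Ico q (p + 1), ρ m := by rw [hsum]; ring

theorem le_mul_sum_prod_of_le_add_mul_succ {K : ℝ} {ρ a : ℕ → ℝ} {L N : ℕ}
    (hbase : a N ≤ K) (hρ : ∀ p, L ≤ p → p < N → 0 ≤ ρ p)
    (hstep : ∀ p, L ≤ p → p < N → a p ≤ K + ρ p * a (p + 1)) :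
    ∀ p, L ≤ p → p ≤ N → a p ≤ K * ∑ q ∈ Icc p N, ∏ m ∈ Ico p q, ρ m := by
  intro p hLp hpN
  induction hpN using Nat.decreasingInduction with
  | self => simpa using hbase
  | of_succ p hpN ih =>
    have hsum : ∑ q ∈ Icc p N, ∏ m ∈ Ico p q, ρ m
        = 1 + ρ p * ∑ q ∈ Icc (p + 1) N, ∏ m ∈ Ico (p + 1) q, ρ m := by
      rw [← insert_Icc_add_one_left_eq_Icc hpN.le, sum_insert (by simp), Ico_self, prod_empty,
        mul_sum]
      congr 1
      refine sum_congr rfl fun q hq => ?_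
      rw [prod_eq_prod_Ico_succ_bot (by simp at hq; omega)]
    calc a p ≤ K + ρ p * a (p + 1) := hstep p hLp hpN
      _ ≤ K + ρ p * (K * ∑ q ∈ Icc (p + 1) N, ∏ m ∈ Ico (p + 1) q, ρ m) := by
        gcongr
        exacts [hρ p hLp hpN, ih (by omega)]
      _ = K * ∑ q ∈ Icc p N, ∏ m ∈ Ico p q, ρ m := by rw [hsum]; ring

theorem abs_mul_le_of_mul_add_mul_eq {a b l x y z M : ℝ} (h : a * x + b * y = l * z)
    (hz : |z| ≤ M) : |b * y| ≤ |l| * M + |a * x| := by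
  rw [eq_sub_of_add_eq' h]
  refine (abs_sub _ _).trans ?_
  rw [abs_mul]
  gcongr

namespace TridiagRecurrence

variable {n : ℕ} {c B : ℝ} {t : ℕ → ℝ}

theorem ratio_nonneg (hc : 0 < c) (htc : ∀ k, 1 ≤ k → k ≤ 2 * n - 1 → c ≤ t k) {m : ℕ}
    (hm : 1 ≤ m) (hmn : m < n) : 0 ≤ t (2 * m) / t (2 * m + 1) :=
  div_nonneg (hc.le.trans (htc _ (by omega) (by omega)))
    (hc.le.trans (htc _ (by omega) (by omega)))

theorem prod_Ico_ratio_le (hB : 1 ≤ B)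
    (hprod : ∀ a b : ℕ, 1 ≤ a → a ≤ b → b ≤ n - 1 →
      ∏ k ∈ Finset.Icc a b, t (2 * k) / t (2 * k + 1) ≤ B)
    {a b : ℕ} (ha : 1 ≤ a) (hb : b ≤ n) : ∏ m ∈ Ico a b, t (2 * m) / t (2 * m + 1) ≤ B := by
  rcases le_or_gt b a with hba | hab
  · rwa [Ico_eq_empty_of_le hba, prod_empty]
  · obtain ⟨b, rfl⟩ : ∃ b', b = b' + 1 := ⟨b - 1, by omega⟩
    rw [Ico_add_one_right_eq_Icc]
    exact hprod a b ha (by omega) (by omega)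

theorem abs_even_entry_le (hc : 0 < c) (hB : 1 ≤ B)
    (htc : ∀ k, 1 ≤ k → k ≤ 2 * n - 1 → c ≤ t k)
    (hprod : ∀ a b : ℕ, 1 ≤ a → a ≤ b → b ≤ n - 1 →
      ∏ k ∈ Finset.Icc a b, t (2 * k) / t (2 * k + 1) ≤ B)
    {w : ℕ → ℝ} {lam M : ℝ} (hM : ∀ k, |w k| ≤ M) (hw0 : w 0 = 0)
    (hrow : ∀ i < 2 * n, t i * w i + t (i + 1) * w (i + 2) = lam * w (i + 1))
    {p : ℕ} (hp : 1 ≤ p) (hpn : p ≤ n) :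
    |w (2 * p)| ≤ n * B * (|lam| * M / c) := by
  have hM0 : 0 ≤ M := (abs_nonneg _).trans (hM 0)
  have hbase : |w 2| ≤ |lam| * M / c := by
    have h := abs_mul_le_of_mul_add_mul_eq (hrow 0 (by omega)) (hM 1)
    have ht := htc 1 le_rfl (by omega)
    rw [hw0, mul_zero, abs_zero, add_zero, abs_mul, abs_of_pos (hc.trans_le ht)] at h
    rw [le_div_iff₀ hc, mul_comm]
    exact (mul_le_mul_of_nonneg_right ht (abs_nonneg _)).trans h
  have hstep : ∀ q, 1 ≤ q → q < n →
      |w (2 * (q + 1))| ≤ |lam| * M / c + t (2 * q) / t (2 * q + 1) * |w (2 * q)| := by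
    intro q hq hqn
    have h := abs_mul_le_of_mul_add_mul_eq (hrow (2 * q) (by omega)) (hM _)
    have ht := htc (2 * q + 1) (by omega) (by omega)
    have ht' := htc (2 * q) (by omega) (by omega)
    rw [abs_mul, abs_mul, abs_of_pos (hc.trans_le ht), abs_of_pos (hc.trans_le ht')] at h
    calc |w (2 * (q + 1))| ≤ (|lam| * M + t (2 * q) * |w (2 * q)|) / t (2 * q + 1) := by
          rw [le_div_iff₀ (hc.trans_le ht), mul_comm]
          exact h
      _ = |lam| * M / t (2 * q + 1) + t (2 * q) / t (2 * q + 1) * |w (2 * q)| := by ring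
      _ ≤ |lam| * M / c + t (2 * q) / t (2 * q + 1) * |w (2 * q)| := by
          gcongr
  calc |w (2 * p)|
      ≤ |lam| * M / c * ∑ q ∈ Icc 1 p, ∏ m ∈ Ico q p, t (2 * m) / t (2 * m + 1) :=
        le_mul_sum_prod_of_succ_le_add_mul (e := fun q => |w (2 * q)|) hbase
          (fun q hq hqn => ratio_nonneg hc htc hq hqn) hstep p hp hpn
    _ ≤ |lam| * M / c * (n * B) := by
        gcongr
        refine (sum_le_card_nsmul _ _ B fun q hq =>
          prod_Ico_ratio_le hB hprod (mem_Icc.1 hq).1 hpn).trans ?_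
        rw [nsmul_eq_mul, Nat.card_Icc]
        gcongr
        omega
    _ = n * B * (|lam| * M / c) := by ring

theorem abs_odd_entry_le (hc : 0 < c) (hB : 1 ≤ B)
    (htc : ∀ k, 1 ≤ k → k ≤ 2 * n - 1 → c ≤ t k)
    (hprod : ∀ a b : ℕ, 1 ≤ a → a ≤ b → b ≤ n - 1 →
      ∏ k ∈ Finset.Icc a b, t (2 * k) / t (2 * k + 1) ≤ B)
    {w : ℕ → ℝ} {lam M : ℝ} (hM : ∀ k, |w k| ≤ M) (hwtop : w (2 * n + 1) = 0)
    (hrow : ∀ i < 2 * n, t i * w i + t (i + 1) * w (i + 2) = lam * w (i + 1))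
    {p : ℕ} (hp : 1 ≤ p) (hpn : p ≤ n) :
    |w (2 * p - 1)| ≤ n * B * (|lam| * M / c) := by
  have hM0 : 0 ≤ M := (abs_nonneg _).trans (hM 0)
  have hweighted : ∀ q, 1 ≤ q → q ≤ n →
      t (2 * q - 1) * |w (2 * q - 1)| ≤ |lam| * M + |t (2 * q) * w (2 * q + 1)| := by
    intro q hq hqn
    have h := hrow (2 * q - 1) (by omega)
    rw [show 2 * q - 1 + 1 = 2 * q by omega, show 2 * q - 1 + 2 = 2 * q + 1 by omega,
      add_comm] at h
    have ht := htc (2 * q - 1) (by omega) (by omega)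
    simpa only [abs_mul, abs_of_pos (hc.trans_le ht)] using
      abs_mul_le_of_mul_add_mul_eq h (hM _)
  have hbase : t (2 * n - 1) * |w (2 * n - 1)| ≤ |lam| * M := by
    simpa [hwtop] using hweighted n (by omega) le_rfl
  have hstep : ∀ q, 1 ≤ q → q < n → t (2 * q - 1) * |w (2 * q - 1)| ≤
      |lam| * M + t (2 * q) / t (2 * q + 1) * (t (2 * (q + 1) - 1) * |w (2 * (q + 1) - 1)|) := by
    intro q hq hqn
    have ht := htc (2 * q + 1) (by omega) (by omega)
    have ht' := htc (2 * q) (by omega) (by omega)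
    rw [show 2 * (q + 1) - 1 = 2 * q + 1 by omega, ← mul_assoc,
      div_mul_cancel₀ _ (hc.trans_le ht).ne']
    simpa only [abs_mul, abs_of_pos (hc.trans_le ht')] using hweighted q hq hqn.le
  have hrec := le_mul_sum_prod_of_le_add_mul_succ
    (a := fun q => t (2 * q - 1) * |w (2 * q - 1)|) hbase
    (fun q hq hqn => ratio_nonneg hc htc hq hqn) hstep p hp hpn
  have hsum : ∑ q ∈ Icc p n, ∏ m ∈ Ico p q, t (2 * m) / t (2 * m + 1) ≤ n * B := by
    refine (sum_le_card_nsmul _ _ B fun q hq =>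
      prod_Ico_ratio_le hB hprod hp (mem_Icc.1 hq).2).trans ?_
    rw [nsmul_eq_mul, Nat.card_Icc]
    gcongr
    omega
  have ht := htc (2 * p - 1) (by omega) (by omega)
  rw [← mul_div_assoc, le_div_iff₀ hc, mul_comm _ c]
  calc c * |w (2 * p - 1)| ≤ t (2 * p - 1) * |w (2 * p - 1)| := by gcongr
    _ ≤ |lam| * M * (n * B) := hrec.trans (mul_le_mul_of_nonneg_left hsum (by positivity))
    _ = n * B * (|lam| * M) := by ring

theorem abs_entry_le (hc : 0 < c) (hB : 1 ≤ B)
    (htc : ∀ k, 1 ≤ k → k ≤ 2 * n - 1 → c ≤ t k)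
    (hprod : ∀ a b : ℕ, 1 ≤ a → a ≤ b → b ≤ n - 1 →
      ∏ k ∈ Finset.Icc a b, t (2 * k) / t (2 * k + 1) ≤ B)
    {w : ℕ → ℝ} {lam M : ℝ} (hM : ∀ k, |w k| ≤ M) (hw0 : w 0 = 0) (hwtop : w (2 * n + 1) = 0)
    (hrow : ∀ i < 2 * n, t i * w i + t (i + 1) * w (i + 2) = lam * w (i + 1))
    {k : ℕ} (hk : 1 ≤ k) (hkn : k ≤ 2 * n) :
    |w k| ≤ n * B * (|lam| * M / c) := by
  obtain ⟨p, rfl | rfl⟩ := Nat.even_or_odd' k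
  · exact abs_even_entry_le hc hB htc hprod hM hw0 hrow (by omega) (by omega)
  · have h := abs_odd_entry_le hc hB htc hprod hM hwtop hrow (p := p + 1) (by omega) (by omega)
    rwa [show 2 * (p + 1) - 1 = 2 * p + 1 by omega] at h

end TridiagRecurrence

/-- `padVec v k = v_{k-1}` for `1 ≤ k ≤ m` and `0` otherwise: the zeros at `0` and `m + 1` make the
first and last rows of `tridiagMatrix m t *ᵥ v` instances of the interior three-term formula. -/
def padVec {m : ℕ} (v : Fin m → ℝ) (k : ℕ) : ℝ :=
  if h : 1 ≤ k ∧ k ≤ m then v ⟨k - 1, by omega⟩ else 0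

theorem padVec_zero {m : ℕ} (v : Fin m → ℝ) : padVec v 0 = 0 := by
  simp [padVec]

theorem padVec_of_lt {m : ℕ} (v : Fin m → ℝ) {k : ℕ} (hk : m < k) : padVec v k = 0 := by
  simp [padVec]; omega

theorem abs_padVec_le {m : ℕ} {v : Fin m → ℝ} {M : ℝ} (hM0 : 0 ≤ M) (hM : ∀ j, |v j| ≤ M)
    (k : ℕ) : |padVec v k| ≤ M := by
  unfold padVec
  split_ifs
  exacts [hM _, by simpa using hM0]

theorem padVec_succ {m : ℕ} (v : Fin m → ℝ) (j : Fin m) : padVec v (j + 1) = v j := by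
  simp [padVec, j.isLt]

theorem tridiagMatrix_mulVec_apply {m : ℕ} (t : ℕ → ℝ) (v : Fin m → ℝ) (i : Fin m) :
    (tridiagMatrix m t *ᵥ v) i = t i * padVec v i + t (i + 1) * padVec v (i + 2) := by
  let F : ℕ → ℝ := fun k => if k = i then t k * padVec v k else 0
  have hsplit : (tridiagMatrix m t *ᵥ v) i = ∑ k ∈ range m,
      ((if (i : ℕ) + 1 = k then t (i + 1) * padVec v (k + 1) else 0) + F (k + 1)) := by
    rw [mulVec, dotProduct, ← Fin.sum_univ_eq_sum_range]
    refine sum_congr rfl fun j _ => ?_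
    simp only [tridiagMatrix, of_apply, F, ← padVec_succ v]
    split_ifs <;> first | omega | ring
  have hF : ∑ k ∈ range m, F (k + 1) = t i * padVec v i := by
    have h := sum_range_succ' F m
    simp only [F, padVec_zero, mul_zero, ite_self, add_zero] at h
    simp [F, ← h]
  rw [hsplit, sum_add_distrib, sum_ite_eq, hF, add_comm]
  split_ifs with h
  · rfl
  · rw [padVec_of_lt v (k := i + 2) (by simp at h; omega), mul_zero]

theorem tridiagMatrix_row_eq_of_mulVec_eq_smul {m : ℕ} {t : ℕ → ℝ} {v : Fin m → ℝ} {lam : ℝ}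
    (h : tridiagMatrix m t *ᵥ v = lam • v) {i : ℕ} (hi : i < m) :
    t i * padVec v i + t (i + 1) * padVec v (i + 2) = lam * padVec v (i + 1) := by
  have := congrFun h ⟨i, hi⟩
  rwa [tridiagMatrix_mulVec_apply, Pi.smul_apply, smul_eq_mul, ← padVec_succ v ⟨i, hi⟩] at this

theorem tridiag_even_eigenvalue_lower_bound_general
    (n : ℕ) (c B : ℝ) (hc : 0 < c) (hB : 1 ≤ B)
    (t : ℕ → ℝ)
    (htc : ∀ k, 1 ≤ k → k ≤ 2 * n - 1 → c ≤ t k)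
    (hprod : ∀ a b : ℕ, 1 ≤ a → a ≤ b → b ≤ n - 1 →
      ∏ k ∈ Finset.Icc a b, t (2 * k) / t (2 * k + 1) ≤ B)
    (lam : ℝ)
    (hlam : Module.End.HasEigenvalue (Matrix.toLin' (tridiagMatrix (2 * n) t)) lam) :
    c / (Real.sqrt (2 * n) * n * B) ≤ |lam| := by
  obtain ⟨v, hv⟩ := hlam.exists_hasEigenvector
  have hveq : tridiagMatrix (2 * n) t *ᵥ v = lam • v := by
    simpa [Matrix.toLin'_apply] using hv.apply_eq_smul
  obtain ⟨i, hi⟩ := Function.ne_iff.1 hv.2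
  have : Nonempty (Fin (2 * n)) := ⟨i⟩
  obtain ⟨j, hj⟩ := Finite.exists_max fun j => |v j|
  have hvj : 0 < |v j| := (abs_pos.2 hi).trans_le (hj i)
  have hentry := TridiagRecurrence.abs_entry_le hc hB htc hprod (abs_padVec_le hvj.le hj)
    (padVec_zero v) (padVec_of_lt v (by omega))
    (fun i hi => tridiagMatrix_row_eq_of_mulVec_eq_smul hveq hi) (k := j + 1) (by omega) j.isLt
  rw [padVec_succ] at hentry
  have hclam : c ≤ n * B * |lam| := by
    refine le_of_mul_le_mul_left ?_ hvj
    calc |v j| * c ≤ n * B * (|lam| * |v j|) := by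
          rwa [← mul_div_assoc, le_div_iff₀ hc] at hentry
      _ = |v j| * (n * B * |lam|) := by ring
  have hn : (1 : ℝ) ≤ n := by
    have := j.isLt
    exact_mod_cast (show 1 ≤ n by omega)
  have hnB : 0 < n * B := by positivity
  have hsqrt : 1 ≤ Real.sqrt (2 * n) := by
    rw [Real.one_le_sqrt]
    linarith
  calc c / (Real.sqrt (2 * n) * n * B) ≤ c / (n * B) := by
        rw [mul_assoc]
        exact div_le_div_of_nonneg_left hc.le hnB (le_mul_of_one_le_left hnB.le hsqrt)
    _ ≤ |lam| := by
        rw [div_le_iff₀ hnB]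
        linarith

/-- For `n ≥ 1` and positive `t₁, …, t_{2n-1}` with `tᵢ ≥ c > 0`, if every
partial product `∏_{k=a}^{b} t_{2k}/t_{2k+1}` with `1 ≤ a ≤ b ≤ n-1` is at most `B ≥ 1`,
then every eigenvalue `λ` of the `2n × 2n` tridiagonal matrix satisfies
`|λ| ≥ c / (√(2n)·n·B)`. -/
theorem tridiag_even_eigenvalue_lower_bound
    (n : ℕ) (hn : 1 ≤ n) (c B : ℝ) (hc : 0 < c) (hB : 1 ≤ B)
    (t : ℕ → ℝ)
    (htpos : ∀ k, 1 ≤ k → k ≤ 2 * n - 1 → 0 < t k)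
    (htc : ∀ k, 1 ≤ k → k ≤ 2 * n - 1 → c ≤ t k)
    (hprod : ∀ a b : ℕ, 1 ≤ a → a ≤ b → b ≤ n - 1 →
      ∏ k ∈ Finset.Icc a b, t (2 * k) / t (2 * k + 1) ≤ B)
    (lam : ℝ)
    (hlam : Module.End.HasEigenvalue (Matrix.toLin' (tridiagMatrix (2 * n) t)) lam) :
    c / (Real.sqrt (2 * n) * n * B) ≤ |lam| :=
  tridiag_even_eigenvalue_lower_bound_general n c B hc hB t htc hprod lam hlam
end

section
/- Let n ≥ 1, let t₁, …, t_{2n−1} be nonzero real numbers, let H_{2n} be the 2n×2n real symmetric tridiagonal matrix with zero diagonal and off-diagonal entries H_{i,i+1} = H_{i+1,i} = tᵢ, and let H_{2n−1} be its leading (2n−1)×(2n−1) principal submatrix (obtained by deleting the last row and column). Then every nonzero eigenvalue μ of H_{2n−1} satisfies |μ| ≥ min{ |λ| : λ is an eigenvalue of H_{2n} }. -/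
/-!
The matrix `H_{2n}` only couples indices of opposite parity, and the deleted index `2n - 1`
is odd. If `H_{2n-1} u = μ u` with `μ ≠ 0`, then `H_{2n-1}` maps the odd part of `u` to `μ`
times its even part, and symmetry forces the two parts to have the same norm. Extend the odd
part `w` by zero: `H_{2n} w` vanishes at odd indices and agrees with `μ u` at even ones, so
`‖H_{2n} w‖ = |μ| ‖w‖`. Expanding `w` in an orthonormal eigenbasis of `H_{2n}` then yields
an eigenvalue `λ` with `|λ| ≤ |μ|`.
-/

open Function Module End Matrix

theorem LinearMap.IsSymmetric.exists_hasEigenvalue_sq_mul_norm_sq_le {E : Type*}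
    [NormedAddCommGroup E] [InnerProductSpace ℝ E] [FiniteDimensional ℝ E] [Nontrivial E]
    {T : E →ₗ[ℝ] E} (hT : T.IsSymmetric) (x : E) :
    ∃ c, HasEigenvalue T c ∧ c ^ 2 * ‖x‖ ^ 2 ≤ ‖T x‖ ^ 2 := by
  let b := hT.eigenvectorBasis rfl
  let ev := hT.eigenvalues rfl
  have : Nonempty (Fin (finrank ℝ E)) := ⟨⟨0, finrank_pos⟩⟩
  obtain ⟨i₀, -, hmin⟩ :=
    Finset.univ.exists_min_image (fun i => ev i ^ 2) Finset.univ_nonempty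
  have hinner (i) : inner ℝ (b i) (T x) = ev i * inner ℝ (b i) x := by
    rw [← hT, hT.apply_eigenvectorBasis, real_inner_smul_left]
    rfl
  refine ⟨ev i₀, hT.hasEigenvalue_eigenvalues rfl i₀, ?_⟩
  calc ev i₀ ^ 2 * ‖x‖ ^ 2 = ∑ i, ev i₀ ^ 2 * inner ℝ (b i) x ^ 2 := by
        rw [← b.sum_sq_inner_right, Finset.mul_sum]
    _ ≤ ∑ i, ev i ^ 2 * inner ℝ (b i) x ^ 2 := by
        refine Finset.sum_le_sum fun i hi => ?_
        exact mul_le_mul_of_nonneg_right (hmin i hi) (sq_nonneg _)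
    _ = ‖T x‖ ^ 2 := by
        simp only [← b.sum_sq_inner_right, hinner, mul_pow]

variable {ι κ : Type*}

theorem Matrix.IsSymm.exists_hasEigenvalue_sq_mul_le [Fintype ι] [DecidableEq ι]
    [Nonempty ι] {A : Matrix ι ι ℝ} (hA : A.IsSymm) (w : ι → ℝ) :
    ∃ c, HasEigenvalue (toLin' A) c ∧ c ^ 2 * (w ⬝ᵥ w) ≤ (A *ᵥ w) ⬝ᵥ (A *ᵥ w) := by
  have hT : (toEuclideanLin A).IsSymmetric :=
    isSymmetric_toEuclideanLin_iff.mpr (isHermitian_iff_isSymm.mpr hA)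
  obtain ⟨c, hc, hle⟩ := hT.exists_hasEigenvalue_sq_mul_norm_sq_le (WithLp.toLp 2 w)
  refine ⟨c, ?_, ?_⟩
  · rw [hasEigenvalue_iff_mem_spectrum, spectrum_toLin', ← spectrum_toLpLin 2]
    exact hc.mem_spectrum
  · have hnorm (v : ι → ℝ) : ‖WithLp.toLp 2 v‖ ^ 2 = v ⬝ᵥ v := by
      rw [EuclideanSpace.real_norm_sq_eq]
      simp [dotProduct, sq]
    rwa [toLpLin_toLp, toLin'_apply, hnorm, hnorm] at hle

def Matrix.IsBipartite {α : Type*} [Zero α] (A : Matrix ι ι α) (s : Set ι) : Prop :=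
  ∀ i j, (i ∈ s ↔ j ∈ s) → A i j = 0

namespace Matrix.IsBipartite

variable {α : Type*} {s : Set ι}

section
variable {A : Matrix ι ι α}

theorem compl [Zero α] (hA : A.IsBipartite s) : A.IsBipartite sᶜ :=
  fun i j hij => hA i j (not_iff_not.mp hij)

theorem submatrix [Zero α] (hA : A.IsBipartite s) (e : κ → ι) :
    (A.submatrix e e).IsBipartite (e ⁻¹' s) :=
  fun i j hij => hA (e i) (e j) hij

theorem mulVec_indicator [Fintype ι] [NonUnitalNonAssocSemiring α] (hA : A.IsBipartite s)
    (v : ι → α) : A *ᵥ s.indicator v = sᶜ.indicator (A *ᵥ v) := by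
  ext i
  simp only [mulVec, dotProduct]
  by_cases hi : i ∈ s
  · rw [Set.indicator_of_notMem (Set.notMem_compl_iff.mpr hi)]
    refine Finset.sum_eq_zero fun j _ => ?_
    by_cases hj : j ∈ s
    · rw [hA i j (iff_of_true hi hj), zero_mul]
    · rw [Set.indicator_of_notMem hj, mul_zero]
  · rw [Set.indicator_of_mem (Set.mem_compl hi)]
    refine Finset.sum_congr rfl fun j _ => ?_
    by_cases hj : j ∈ s
    · rw [Set.indicator_of_mem hj]
    · simp [Set.indicator_of_notMem hj, hA i j (iff_of_false hi hj)]

theorem mulVec_indicator_eq_smul [Fintype ι] [CommRing α] (hA : A.IsBipartite s) {μ : α}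
    {u : ι → α} (hu : Set.EqOn (A *ᵥ u) (μ • u) sᶜ) :
    A *ᵥ s.indicator u = μ • sᶜ.indicator u := by
  ext i
  rw [hA.mulVec_indicator, Set.indicator_congr hu, Pi.smul_apply,
    ← Set.indicator_const_smul_apply]
  rfl

end

variable [Fintype ι] {A : Matrix ι ι ℝ} {μ : ℝ} {u : ι → ℝ}

theorem dotProduct_indicator_self_eq (hAsymm : A.IsSymm) (hA : A.IsBipartite s)
    (hμ : μ ≠ 0) (hu : A *ᵥ u = μ • u) :
    s.indicator u ⬝ᵥ s.indicator u = sᶜ.indicator u ⬝ᵥ sᶜ.indicator u := by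
  have hs := hA.mulVec_indicator_eq_smul (u := u) (μ := μ) fun i _ => congrFun hu i
  have hsc := hA.compl.mulVec_indicator_eq_smul (u := u) (μ := μ) fun i _ => congrFun hu i
  rw [compl_compl] at hsc
  apply mul_left_cancel₀ hμ
  calc μ * (s.indicator u ⬝ᵥ s.indicator u)
        = (A *ᵥ sᶜ.indicator u) ⬝ᵥ s.indicator u := by
        rw [hsc, smul_dotProduct, smul_eq_mul]
    _ = sᶜ.indicator u ⬝ᵥ (A *ᵥ s.indicator u) := by
        rw [dotProduct_mulVec, ← vecMul_transpose, hAsymm.eq]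
    _ = μ * (sᶜ.indicator u ⬝ᵥ sᶜ.indicator u) := by
        rw [hs, dotProduct_smul, smul_eq_mul]

theorem indicator_ne_zero (hAsymm : A.IsSymm) (hA : A.IsBipartite s)
    (hμ : μ ≠ 0) (hu : A *ᵥ u = μ • u) (hu0 : u ≠ 0) : s.indicator u ≠ 0 := by
  intro hs
  have hsc : sᶜ.indicator u = 0 := dotProduct_self_eq_zero.mp <| by
    rw [← hA.dotProduct_indicator_self_eq hAsymm hμ hu, hs, zero_dotProduct]
  exact hu0 (by rw [← s.indicator_self_add_compl u, hs, hsc, add_zero])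

end Matrix.IsBipartite

section extend

variable {α : Type*} {e : κ → ι}

theorem Set.indicator_extend_zero [Zero α] (he : Injective e) (s : Set ι) (v : κ → α) :
    s.indicator (extend e v 0) = extend e ((e ⁻¹' s).indicator v) 0 := by
  ext i
  by_cases hi : ∃ k, e k = i
  · obtain ⟨k, rfl⟩ := hi
    rw [he.extend_apply, ← Set.indicator_comp_right, extend_comp he]
  · simp [extend_apply' _ _ _ hi]

variable [Fintype ι] [Fintype κ]

theorem extend_zero_dotProduct [NonUnitalNonAssocSemiring α] (he : Injective e) (v : κ → α)
    (x : ι → α) : extend e v 0 ⬝ᵥ x = v ⬝ᵥ (x ∘ e) :=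
  Eq.symm <| Fintype.sum_of_injective e he _ _
    (fun _ hi => by rw [extend_apply' _ _ _ hi, Pi.zero_apply, zero_mul])
    (fun k => by rw [he.extend_apply, Function.comp_apply])

theorem extend_zero_dotProduct_extend_zero [NonUnitalNonAssocSemiring α] (he : Injective e)
    (v v' : κ → α) : extend e v 0 ⬝ᵥ extend e v' 0 = v ⬝ᵥ v' := by
  rw [extend_zero_dotProduct he, extend_comp he]

theorem Matrix.mulVec_extend_zero_apply [NonUnitalCommSemiring α] (he : Injective e)
    (A : Matrix ι ι α) (v : κ → α) (k : κ) :
    (A *ᵥ extend e v 0) (e k) = (A.submatrix e e *ᵥ v) k := by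
  rw [mulVec, dotProduct_comm, extend_zero_dotProduct he, dotProduct_comm]
  rfl

end extend

theorem Matrix.IsBipartite.exists_hasEigenvalue_abs_le_of_submatrix [Fintype ι]
    [DecidableEq ι] [Fintype κ] [DecidableEq κ] {A : Matrix ι ι ℝ} {s : Set ι} (hAsymm : A.IsSymm)
    (hA : A.IsBipartite s) {e : κ → ι} (he : Injective e) (hse : sᶜ ⊆ Set.range e) {μ : ℝ}
    (hμ : HasEigenvalue (toLin' (A.submatrix e e)) μ) (hμ0 : μ ≠ 0) :
    ∃ c, HasEigenvalue (toLin' A) c ∧ |c| ≤ |μ| := by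
  obtain ⟨u, hu⟩ := hμ.exists_hasEigenvector
  have hMu : A.submatrix e e *ᵥ u = μ • u := by simpa using hu.apply_eq_smul
  set x := extend e u 0 with hx
  set w := s.indicator x with hw
  have hAw : A *ᵥ w = μ • sᶜ.indicator x := by
    refine hA.mulVec_indicator_eq_smul fun i hi => ?_
    obtain ⟨k, rfl⟩ := hse hi
    rw [hx, mulVec_extend_zero_apply he, hMu, Pi.smul_apply, Pi.smul_apply, he.extend_apply]
  have hww : w ⬝ᵥ w = (e ⁻¹' s).indicator u ⬝ᵥ (e ⁻¹' s).indicator u := by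
    rw [hw, hx, Set.indicator_extend_zero he, extend_zero_dotProduct_extend_zero he]
  have hww' : sᶜ.indicator x ⬝ᵥ sᶜ.indicator x = w ⬝ᵥ w := by
    rw [hww, hx, Set.indicator_extend_zero he, extend_zero_dotProduct_extend_zero he,
      Set.preimage_compl,
      (hA.submatrix e).dotProduct_indicator_self_eq (hAsymm.submatrix e) hμ0 hMu]
  have hpos : 0 < w ⬝ᵥ w := by
    rw [hww]
    simpa using dotProduct_self_star_pos_iff.mpr
      ((hA.submatrix e).indicator_ne_zero (hAsymm.submatrix e) hμ0 hMu hu.2)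
  obtain ⟨k, -⟩ := Function.ne_iff.mp hu.2
  have : Nonempty ι := ⟨e k⟩
  obtain ⟨c, hc, hle⟩ := hAsymm.exists_hasEigenvalue_sq_mul_le w
  refine ⟨c, hc, sq_le_sq.mp (le_of_mul_le_mul_right ?_ hpos)⟩
  rwa [hAw, smul_dotProduct, dotProduct_smul, hww', smul_eq_mul, smul_eq_mul, ← mul_assoc,
    ← sq] at hle

theorem tridiagMatrix_isSymm (m : ℕ) (t : ℕ → ℝ) : (tridiagMatrix m t).IsSymm :=
  IsSymm.ext fun i j => by
    simp only [tridiagMatrix, of_apply]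
    split_ifs <;> first | rfl | omega

theorem tridiagMatrix_isBipartite (m : ℕ) (t : ℕ → ℝ) :
    (tridiagMatrix m t).IsBipartite {i | Odd (i : ℕ)} := fun i j hij => by
  simp only [Set.mem_ofPred_eq, Nat.odd_iff] at hij
  simp only [tridiagMatrix, of_apply]
  split_ifs <;> first | rfl | omega

/-- (Interlacing consequence.) Let `H₂ₙ` be the `2n × 2n` tridiagonal matrix
with nonzero off-diagonal entries `t₁, …, t_{2n-1}` and let `H_{2n-1}` be its leading principal
submatrix obtained by deleting the last row and column.  Then every nonzero eigenvalue `μ` of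
`H_{2n-1}` satisfies `|μ| ≥ min{|λ| : λ eigenvalue of H₂ₙ}`. -/
theorem tridiag_principal_submatrix_gap_bound
    (n : ℕ) (t : ℕ → ℝ)
    (μ : ℝ)
    (hμ : Module.End.HasEigenvalue
      (Matrix.toLin' ((tridiagMatrix (2 * n) t).submatrix
        (fun i : Fin (2 * n - 1) => Fin.castLE (by omega) i)
        (fun i : Fin (2 * n - 1) => Fin.castLE (by omega) i))) μ)
    (hμ0 : μ ≠ 0)
    (Δ : ℝ)
    (hΔ : IsLeast {x : ℝ | ∃ lam : ℝ,
        Module.End.HasEigenvalue (Matrix.toLin' (tridiagMatrix (2 * n) t)) lam ∧ x = |lam|} Δ) :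
    Δ ≤ |μ| := by
  have heven : {i : Fin (2 * n) | Odd (i : ℕ)}ᶜ ⊆ Set.range (Fin.castLE (Nat.sub_le _ 1)) :=
    fun i hi => ⟨⟨i, by
      simp only [Set.mem_compl_iff, Set.mem_ofPred_eq, Nat.odd_iff] at hi
      omega⟩, rfl⟩
  obtain ⟨c, hc, hcμ⟩ :=
    (tridiagMatrix_isBipartite (2 * n) t).exists_hasEigenvalue_abs_le_of_submatrix
      (tridiagMatrix_isSymm _ t) (Fin.castLE_injective _) heven hμ hμ0
  exact (hΔ.2 ⟨c, hc, rfl⟩).trans hcμ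
end

section
/- There exists a constant C > 0 such that for every integer N ≥ 2, Σ_{(k,ℓ) ∈ {0,…,N}² \ {(0,0)}} 1/( sin²(πk/(2N)) + sin²(πℓ/(2N)) ) ≤ C·N²·log N. -/
/-!
Jordan's inequality `sin (π x / 2) ≥ x` on `[0, 1]` bounds each summand by `2N² / (k + ℓ)²`.
Grouping the pairs by `s = k + ℓ`, each of the at most `s + 1` pairs contributes `2N² / s²`,
so the sum is at most `4N² H_{2N} ≤ 4N² (1 + log 2N)`, which is `O(N² log N)`.
-/

open Real Finset

lemma one_div_sin_sq_add_sin_sq_le {N k l : ℕ} (hk : k ≤ N) (hl : l ≤ N) (hkl : 0 < k + l) :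
    1 / (sin (π * k / (2 * N)) ^ 2 + sin (π * l / (2 * N)) ^ 2)
      ≤ 2 * (N : ℝ) ^ 2 / ((k + l : ℕ) : ℝ) ^ 2 := by
  have hN : (0 : ℝ) < N := by exact_mod_cast (show 0 < N by omega)
  have jordan : ∀ j : ℕ, j ≤ N → (j : ℝ) / N ≤ sin (π * j / (2 * N)) := fun j hj => by
    have h := le_sin_mul (x := (j : ℝ) / N) (by positivity)
      ((div_le_one hN).mpr (by exact_mod_cast hj))
    rwa [show π / 2 * ((j : ℝ) / N) = π * j / (2 * N) by ring] at h
  have hsq : ∀ j : ℕ, j ≤ N → ((j : ℝ) / N) ^ 2 ≤ sin (π * j / (2 * N)) ^ 2 := fun j hj =>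
    pow_le_pow_left₀ (by positivity) (jordan j hj) 2
  have hkl' : (0 : ℝ) < ((k + l : ℕ) : ℝ) := by exact_mod_cast hkl
  have lower : ((k + l : ℕ) : ℝ) ^ 2 / (2 * (N : ℝ) ^ 2)
      ≤ sin (π * k / (2 * N)) ^ 2 + sin (π * l / (2 * N)) ^ 2 := by
    calc ((k + l : ℕ) : ℝ) ^ 2 / (2 * (N : ℝ) ^ 2)
        ≤ ((k : ℝ) / N) ^ 2 + ((l : ℝ) / N) ^ 2 := by
          rw [div_pow, div_pow, ← add_div, div_le_div_iff₀ (by positivity) (by positivity)]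
          push_cast
          nlinarith [sq_nonneg ((k : ℝ) - l), sq_nonneg (N : ℝ)]
      _ ≤ _ := add_le_add (hsq k hk) (hsq l hl)
  calc _ ≤ 1 / (((k + l : ℕ) : ℝ) ^ 2 / (2 * (N : ℝ) ^ 2)) :=
        one_div_le_one_div_of_le (by positivity) lower
    _ = _ := one_div_div _ _

lemma sum_square_erase_zero_le_sum_Icc (N : ℕ) {f : ℕ → ℝ} (hf : ∀ s, 0 ≤ f s) :
    ∑ p ∈ (range (N + 1) ×ˢ range (N + 1)).erase (0, 0), f (p.1 + p.2)
      ≤ ∑ s ∈ Icc 1 (2 * N), ((s : ℝ) + 1) * f s := by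
  set S := (range (N + 1) ×ˢ range (N + 1)).erase (0, 0)
  have maps_to : ∀ p ∈ S, p.1 + p.2 ∈ Icc 1 (2 * N) := by
    intro p hp
    simp only [S, mem_erase, mem_product, mem_range, ne_eq, Prod.ext_iff, not_and] at hp
    simp only [mem_Icc]
    omega
  rw [← sum_fiberwise_of_maps_to maps_to]
  refine sum_le_sum fun s _ => ?_
  have fiber_card : #{p ∈ S | p.1 + p.2 = s} ≤ s + 1 := by
    rw [← Finset.Nat.card_antidiagonal s]
    exact card_le_card fun p hp => by simpa using (mem_filter.mp hp).2
  calc ∑ p ∈ S with p.1 + p.2 = s, f (p.1 + p.2)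
      = ∑ p ∈ S with p.1 + p.2 = s, f s := sum_congr rfl fun p hp => by rw [(mem_filter.mp hp).2]
    _ = #{p ∈ S | p.1 + p.2 = s} * f s := by rw [sum_const, nsmul_eq_mul]
    _ ≤ ((s : ℝ) + 1) * f s := mul_le_mul_of_nonneg_right (by exact_mod_cast fiber_card) (hf s)

lemma sum_Icc_succ_mul_div_sq_le (n : ℕ) {c : ℝ} (hc : 0 ≤ c) :
    ∑ s ∈ Icc 1 n, ((s : ℝ) + 1) * (c / (s : ℝ) ^ 2) ≤ 2 * c * (1 + log n) := by
  calc ∑ s ∈ Icc 1 n, ((s : ℝ) + 1) * (c / (s : ℝ) ^ 2)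
      ≤ ∑ s ∈ Icc 1 n, 2 * c * (s : ℝ)⁻¹ := sum_le_sum fun s hs => by
        have hs : (1 : ℝ) ≤ s := by exact_mod_cast (mem_Icc.mp hs).1
        rw [show 2 * c * (s : ℝ)⁻¹ = 2 * s * (c / (s : ℝ) ^ 2) by field_simp]
        gcongr
        linarith
    _ = 2 * c * harmonic n := by
        rw [← mul_sum, harmonic_eq_sum_Icc]
        push_cast
        rfl
    _ ≤ 2 * c * (1 + log n) := by gcongr; exact harmonic_le_one_add_log n

lemma one_add_log_two_mul_le {x : ℝ} (hx : 2 ≤ x) : 1 + log (2 * x) ≤ 4 * log x := by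
  have h2 : 1 / 2 ≤ log 2 := by linarith [log_two_gt_d9]
  have hlog : log 2 ≤ log x := log_le_log (by norm_num) hx
  rw [log_mul two_ne_zero (by linarith)]
  linarith

/-- There is a constant `C > 0` such that for every `N ≥ 2`,
`Σ_{(k,ℓ) ∈ {0,…,N}² \ {(0,0)}} 1/(sin²(πk/(2N)) + sin²(πℓ/(2N))) ≤ C·N²·log N`. -/
theorem discrete_laplacian_green_function_sum_bound :
    ∃ C : ℝ, 0 < C ∧ ∀ N : ℕ, 2 ≤ N →
      ∑ p ∈ (Finset.range (N + 1) ×ˢ Finset.range (N + 1)).erase (0, 0),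
          1 / (Real.sin (Real.pi * p.1 / (2 * N)) ^ 2 +
               Real.sin (Real.pi * p.2 / (2 * N)) ^ 2)
        ≤ C * N ^ 2 * Real.log N := by
  refine ⟨16, by norm_num, fun N hN => ?_⟩
  have hN2 : (2 : ℝ) ≤ N := by exact_mod_cast hN
  calc _ ≤ ∑ p ∈ (range (N + 1) ×ˢ range (N + 1)).erase (0, 0),
            2 * (N : ℝ) ^ 2 / ((p.1 + p.2 : ℕ) : ℝ) ^ 2 := by
          refine sum_le_sum fun p hp => ?_
          simp only [mem_erase, mem_product, mem_range, ne_eq, Prod.ext_iff, not_and] at hp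
          exact one_div_sin_sq_add_sin_sq_le (by omega) (by omega) (by omega)
    _ ≤ ∑ s ∈ Icc 1 (2 * N), ((s : ℝ) + 1) * (2 * (N : ℝ) ^ 2 / (s : ℝ) ^ 2) :=
        sum_square_erase_zero_le_sum_Icc N (f := fun s => 2 * (N : ℝ) ^ 2 / (s : ℝ) ^ 2)
          fun s => by positivity
    _ ≤ 2 * (2 * (N : ℝ) ^ 2) * (1 + log (2 * N : ℕ)) :=
        sum_Icc_succ_mul_div_sq_le (2 * N) (by positivity)
    _ ≤ 16 * N ^ 2 * log N := by
        have := one_add_log_two_mul_le hN2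
        push_cast
        nlinarith [sq_nonneg (N : ℝ)]
end
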